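/- arXiv:1803.07454 — 11 statements merged into one kernel-verified Lean document; each statement's English description precedes it below -/
import Mathlib

section
/- Let Y be a vector lattice and X a linear subspace of Y that is directed and generates Y as a vector lattice. Then for every y ∈ Y there exist nonempty finite sets A, B ⊆ {x ∈ X | 0 ≤ x} such that y = (sup A) − (sup B), where the suprema are taken in Y. -/
/-- Let `Y` be a vector lattice and `X` a linear subspace of `Y` that is
directed and generates `Y` as a vector lattice. Then for every `y ∈ Y` there exist nonempty
finite sets `A, B ⊆ {x ∈ X | 0 ≤ x}` such that `y = sup A - sup B` (suprema in `Y`). -/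
theorem statement0
    {Y : Type*} [Lattice Y] [AddCommGroup Y] [Module ℝ Y]
    [CovariantClass Y Y (· + ·) (· ≤ ·)] [PosSMulMono ℝ Y]
    (X : Submodule ℝ Y)
    (hdir : ∀ x ∈ X, ∀ y ∈ X, ∃ z ∈ X, x ≤ z ∧ y ≤ z)
    (hgen : ∀ y : Y, ∃ A B : Finset Y, ∃ hA : A.Nonempty, ∃ hB : B.Nonempty,
      (↑A : Set Y) ⊆ (X : Set Y) ∧ (↑B : Set Y) ⊆ (X : Set Y) ∧
      y = A.sup' hA id - B.sup' hB id) :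
    ∀ y : Y, ∃ A B : Finset Y, ∃ hA : A.Nonempty, ∃ hB : B.Nonempty,
      (↑A : Set Y) ⊆ {x : Y | x ∈ X ∧ 0 ≤ x} ∧
      (↑B : Set Y) ⊆ {x : Y | x ∈ X ∧ 0 ≤ x} ∧
      y = A.sup' hA id - B.sup' hB id := by
  classical
  intro y
  obtain ⟨A, B, hA, hB, hAX, hBX, hy⟩ := hgen y
  -- find c ∈ X with -a ≤ c for all a in A ∪ B
  have key : ∀ S : Finset Y, (↑S : Set Y) ⊆ (X : Set Y) → ∃ c ∈ X, ∀ a ∈ S, -a ≤ c := by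
    intro S
    induction S using Finset.induction with
    | empty => exact fun _ => ⟨0, X.zero_mem, by simp⟩
    | @insert a S ha ih =>
      intro hS
      have haX : a ∈ X := hS (by simp)
      obtain ⟨c, hcX, hc⟩ := ih (fun x hx => hS (by simp [hx]))
      obtain ⟨z, hzX, hz1, hz2⟩ := hdir (-a) (X.neg_mem haX) c hcX
      exact ⟨z, hzX, fun b hb => by
        rcases Finset.mem_insert.1 hb with rfl | hb
        · exact hz1
        · exact le_trans (hc b hb) hz2⟩
  obtain ⟨c, hcX, hc⟩ := key (A ∪ B) (by
    intro x hx
    rcases Finset.mem_union.1 (by exact_mod_cast hx) with h | h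
    · exact hAX h
    · exact hBX h)
  refine ⟨A.image (· + c), B.image (· + c), hA.image _, hB.image _, ?_, ?_, ?_⟩
  · intro x hx
    simp only [Finset.coe_image, Set.mem_image, Finset.mem_coe] at hx
    obtain ⟨a, haA, rfl⟩ := hx
    refine ⟨X.add_mem (hAX haA) hcX, ?_⟩
    have := neg_le_iff_add_nonneg.1 (hc a (Finset.mem_union_left _ haA))
    simpa [add_comm] using this
  · intro x hx
    simp only [Finset.coe_image, Set.mem_image, Finset.mem_coe] at hx
    obtain ⟨a, haB, rfl⟩ := hx
    refine ⟨X.add_mem (hBX haB) hcX, ?_⟩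
    have := neg_le_iff_add_nonneg.1 (hc a (Finset.mem_union_right _ haB))
    simpa [add_comm] using this
  · have hmap : ∀ (S : Finset Y) (hS : S.Nonempty),
        (S.image (· + c)).sup' (hS.image _) id = S.sup' hS id + c := by
      intro S hS
      rw [Finset.sup'_image]
      exact (map_finset_sup' (OrderIso.addRight c) hS id).symm
    rw [hmap A hA, hmap B hB, hy]
    abel
end

section
/- Let Y be an Archimedean vector lattice and X a linear subspace of Y that is order dense in Y. Then the following statements are equivalent: (i) X is pervasive in Y; (ii) for every a ∈ X and every y ∈ Y with a < y there exists x ∈ X with a < x ≤ y; (iii) for every y ∈ Y with 0 < y one has y = sup {x ∈ X | 0 < x ≤ y}, the supremum taken in Y; (iv) for every y ∈ Y and every z ∈ X with z < y one has y = sup {x ∈ X | z < x ≤ y}, the supremum taken in Y. -/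
/-!
Only the implication (i) ⇒ (iii) has content; the others are translations by elements of `X`.
For (i) ⇒ (iii), let `b` be an upper bound of `X ∩ (0, y]` and put `c = b ⊓ y`. If `c < y`,
pervasiveness gives `x ∈ X` with `0 < x ≤ y - c`, and starting from any `s ∈ X ∩ (0, y]` the points
`s + n • x` all stay in `X ∩ (0, y]`, since each lies below `c`. Thus `n • x ≤ y - s` for all `n`,
contradicting the Archimedean property.
-/

open Set

namespace AddSubgroup

variable {Y : Type*} [AddCommGroup Y]

section PartialOrder

variable [PartialOrder Y] [IsOrderedAddMonoid Y] {S : AddSubgroup Y}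

theorem inter_Ioc_eq_image_add {z : Y} (hz : z ∈ S) (y : Y) :
    (S : Set Y) ∩ Ioc z y = (z + ·) '' ((S : Set Y) ∩ Ioc 0 (y - z)) := by
  ext x
  constructor
  · rintro ⟨hxS, hzx, hxy⟩
    exact ⟨x - z, ⟨S.sub_mem hxS hz, sub_pos.2 hzx, sub_le_sub_right hxy z⟩, add_sub_cancel z x⟩
  · rintro ⟨w, ⟨hwS, hw0, hwy⟩, rfl⟩
    exact ⟨S.add_mem hz hwS, lt_add_of_pos_right z hw0, le_sub_iff_add_le'.1 hwy⟩

theorem inter_Ioc_nonempty_iff {z : Y} (hz : z ∈ S) (y : Y) :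
    ((S : Set Y) ∩ Ioc z y).Nonempty ↔ ((S : Set Y) ∩ Ioc 0 (y - z)).Nonempty := by
  rw [S.inter_Ioc_eq_image_add hz, image_nonempty]

theorem isLUB_inter_Ioc_iff {z : Y} (hz : z ∈ S) (y : Y) :
    IsLUB ((S : Set Y) ∩ Ioc z y) y ↔ IsLUB ((S : Set Y) ∩ Ioc 0 (y - z)) (y - z) := by
  have h := (OrderIso.addLeft z).isLUB_image' (s := (S : Set Y) ∩ Ioc 0 (y - z)) (x := y - z)
  rw [OrderIso.addLeft_apply, add_sub_cancel] at h
  rw [S.inter_Ioc_eq_image_add hz]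
  exact h

theorem add_nsmul_mem_inter_Ioc {c x s y : Y}
    (hc : c ∈ upperBounds ((S : Set Y) ∩ Ioc 0 y)) (hxS : x ∈ S) (hx : 0 ≤ x) (hxy : x ≤ y - c)
    (hs : s ∈ (S : Set Y) ∩ Ioc 0 y) (n : ℕ) : s + n • x ∈ (S : Set Y) ∩ Ioc 0 y := by
  induction n with
  | zero => simpa using hs
  | succ n ih =>
    refine ⟨S.add_mem hs.1 (S.nsmul_mem hxS _),
      add_pos_of_pos_of_nonneg hs.2.1 (nsmul_nonneg hx _), ?_⟩
    calc s + (n + 1) • x = (s + n • x) + x := by rw [succ_nsmul, add_assoc]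
      _ ≤ c + (y - c) := add_le_add (hc ih) hxy
      _ = y := add_sub_cancel c y

end PartialOrder

theorem isLUB_inter_Ioc_zero_of_pervasive [Lattice Y] [IsOrderedAddMonoid Y]
    {S : AddSubgroup Y} (hArch : ∀ x y : Y, (∀ n : ℕ, n • x ≤ y) → x ≤ 0)
    (hS : ∀ y : Y, 0 < y → ((S : Set Y) ∩ Ioc 0 y).Nonempty) {y : Y} (hy : 0 < y) :
    IsLUB ((S : Set Y) ∩ Ioc 0 y) y := by
  refine ⟨fun x hx => hx.2.2, fun b hb => ?_⟩
  have hc : b ⊓ y ∈ upperBounds ((S : Set Y) ∩ Ioc 0 y) := fun x hx => le_inf (hb hx) hx.2.2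
  suffices y ≤ b ⊓ y from this.trans inf_le_left
  by_contra hcy
  obtain ⟨x, hxS, hx0, hxy⟩ := hS (y - b ⊓ y)
    (sub_pos.2 (inf_le_right.lt_of_ne fun h => hcy h.ge))
  obtain ⟨s, hs⟩ := hS y hy
  have hbounded (n : ℕ) : n • x ≤ y - s :=
    le_sub_iff_add_le'.2 (S.add_nsmul_mem_inter_Ioc hc hxS hx0.le hxy hs n).2.2
  exact hx0.not_ge (hArch x (y - s) hbounded)

end AddSubgroup

theorem statement1_general
    {Y : Type*} [Lattice Y] [AddCommGroup Y] [Module ℝ Y]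
    [CovariantClass Y Y (· + ·) (· ≤ ·)]
    (hArch : ∀ x y : Y, (∀ n : ℕ, n • x ≤ y) → x ≤ 0)
    (X : Submodule ℝ Y) :
    List.TFAE
      [∀ y : Y, 0 < y → ∃ x ∈ X, 0 < x ∧ x ≤ y,
       ∀ a ∈ X, ∀ y : Y, a < y → ∃ x ∈ X, a < x ∧ x ≤ y,
       ∀ y : Y, 0 < y → IsLUB {x : Y | x ∈ X ∧ 0 < x ∧ x ≤ y} y,
       ∀ y : Y, ∀ z ∈ X, z < y → IsLUB {x : Y | x ∈ X ∧ z < x ∧ x ≤ y} y] := by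
  have : IsOrderedAddMonoid Y :=
    { add_le_add_left := fun _ _ h c => by simpa only [add_comm _ c] using add_le_add_right h c }
  let S := X.toAddSubgroup
  tfae_have 1 → 2 := fun h a ha y hay => (S.inter_Ioc_nonempty_iff ha y).2 (h _ (sub_pos.2 hay))
  tfae_have 2 → 1 := fun h y hy => h 0 X.zero_mem y hy
  tfae_have 1 → 3 := fun h y hy => S.isLUB_inter_Ioc_zero_of_pervasive hArch h hy
  tfae_have 3 → 1 := fun h y hy => by
    by_contra hempty
    exact hy.not_ge ((h y hy).2 fun x hx => (hempty ⟨x, hx⟩).elim)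
  tfae_have 3 → 4 := fun h y z hz hzy => (S.isLUB_inter_Ioc_iff hz y).2 (h _ (sub_pos.2 hzy))
  tfae_have 4 → 3 := fun h y hy => h y 0 X.zero_mem hy
  tfae_finish

/-- Let `Y` be an Archimedean vector lattice and `X` an order dense linear
subspace of `Y`. TFAE: (i) `X` is pervasive in `Y`; (ii) for every `a ∈ X` and `y ∈ Y` with
`a < y` there is `x ∈ X` with `a < x ≤ y`; (iii) every `0 < y` satisfies
`y = sup {x ∈ X | 0 < x ≤ y}`; (iv) for every `y ∈ Y` and `z ∈ X` with `z < y` one has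
`y = sup {x ∈ X | z < x ≤ y}`. -/
theorem statement1
    {Y : Type*} [Lattice Y] [AddCommGroup Y] [Module ℝ Y]
    [CovariantClass Y Y (· + ·) (· ≤ ·)] [PosSMulMono ℝ Y]
    (hArch : ∀ x y : Y, (∀ n : ℕ, n • x ≤ y) → x ≤ 0)
    (X : Submodule ℝ Y)
    (hdense : ∀ y : Y, IsGLB {x : Y | x ∈ X ∧ y ≤ x} y) :
    List.TFAE
      [∀ y : Y, 0 < y → ∃ x ∈ X, 0 < x ∧ x ≤ y,
       ∀ a ∈ X, ∀ y : Y, a < y → ∃ x ∈ X, a < x ∧ x ≤ y,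
       ∀ y : Y, 0 < y → IsLUB {x : Y | x ∈ X ∧ 0 < x ∧ x ≤ y} y,
       ∀ y : Y, ∀ z ∈ X, z < y → IsLUB {x : Y | x ∈ X ∧ z < x ∧ x ≤ y} y] :=
  statement1_general hArch X
end

section
/- Let Y be a vector lattice and X a linear subspace of Y that is directed and Archimedean in the induced order. Then the following are equivalent: (i) X is order dense in Y and X is pervasive in Y; (ii) X is majorizing in Y, and for every y ∈ Y with 0 ≤ y there exists a set A ⊆ {x ∈ X | 0 ≤ x} such that y = sup A, the supremum taken in Y. -/
/-- Let `Y` be a vector lattice and `X` a linear subspace of `Y` that is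
directed and Archimedean in the induced order. TFAE: (i) `X` is order dense in `Y` and
pervasive in `Y`; (ii) `X` is majorizing in `Y` and every `y ∈ Y` with `0 ≤ y` is the
supremum (in `Y`) of some set `A ⊆ {x ∈ X | 0 ≤ x}`. -/
theorem statement2
    {Y : Type*} [Lattice Y] [AddCommGroup Y] [Module ℝ Y]
    [CovariantClass Y Y (· + ·) (· ≤ ·)] [PosSMulMono ℝ Y]
    (X : Submodule ℝ Y)
    (hdir : ∀ x ∈ X, ∀ y ∈ X, ∃ z ∈ X, x ≤ z ∧ y ≤ z)
    (hXarch : ∀ x ∈ X, ∀ y ∈ X, (∀ n : ℕ, n • x ≤ y) → x ≤ 0) :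
    ((∀ y : Y, IsGLB {x : Y | x ∈ X ∧ y ≤ x} y) ∧
      (∀ y : Y, 0 < y → ∃ x ∈ X, 0 < x ∧ x ≤ y)) ↔
    ((∀ y : Y, ∃ d ∈ X, y ≤ d) ∧
      (∀ y : Y, 0 ≤ y → ∃ A : Set Y, A ⊆ {x : Y | x ∈ X ∧ 0 ≤ x} ∧ IsLUB A y)) := by
  constructor
  · rintro ⟨hdense, hperv⟩
    have hmaj : ∀ y : Y, ∃ d ∈ X, y ≤ d := by
      intro y
      by_cases hS : {x : Y | x ∈ X ∧ y ≤ x}.Nonempty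
      · rcases hS with ⟨d, hd, hyd⟩
        exact ⟨d, hd, hyd⟩
      · have hall : ∀ z : Y, z ≤ y := by
          intro z
          exact (hdense y).2 (fun x hx => absurd ⟨x, hx⟩ hS)
        have h0 : ∀ w : Y, w ≤ 0 := by
          intro w
          have h := hall (y + w)
          have : y + w ≤ y + 0 := by simpa using h
          exact le_of_add_le_add_left this
        have hy0 : y = 0 := le_antisymm (h0 y) (by simpa using h0 (-y))
        exact ⟨0, X.zero_mem, hy0.le⟩
    refine ⟨hmaj, ?_⟩
    intro y hy
    refine ⟨{x : Y | x ∈ X ∧ 0 ≤ x ∧ x ≤ y}, fun x hx => ⟨hx.1, hx.2.1⟩, ?_⟩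
    constructor
    · intro a ha
      exact ha.2.2
    · intro z hz
      by_contra hzy
      have h0z : (0 : Y) ≤ z := hz ⟨X.zero_mem, le_refl 0, hy⟩
      have hlt : y ⊓ z < y := by
        refine lt_of_le_of_ne inf_le_left (fun h => hzy ?_)
        calc y = y ⊓ z := h.symm
        _ ≤ z := inf_le_right
      have hpos : 0 < y - y ⊓ z := sub_pos.mpr hlt
      obtain ⟨p, hpX, hp0, hpy⟩ := hperv _ hpos
      have key0 : ∀ n : ℕ, 0 ≤ n • p := by
        intro n
        induction n with
        | zero => simp
        | succ n ih =>
          rw [succ_nsmul]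
          calc (0 : Y) = 0 + 0 := by rw [add_zero]
          _ ≤ n • p + p := add_le_add ih hp0.le
      have key : ∀ n : ℕ, n • p ≤ y ⊓ z := by
        intro n
        induction n with
        | zero => simpa using le_inf hy h0z
        | succ n ih =>
          have h1 : (n + 1) • p ≤ y := by
            rw [succ_nsmul]
            calc n • p + p ≤ (y ⊓ z) + (y - y ⊓ z) := add_le_add ih hpy
            _ = y := by abel
          have hmem : (n + 1) • p ∈ {x : Y | x ∈ X ∧ 0 ≤ x ∧ x ≤ y} :=
            ⟨nsmul_mem hpX (n + 1), key0 (n + 1), h1⟩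
          exact le_inf h1 (hz hmem)
      obtain ⟨d, hdX, hyd⟩ := hmaj y
      have hple : p ≤ 0 :=
        hXarch p hpX d hdX (fun n => ((key n).trans inf_le_left).trans hyd)
      exact absurd hple hp0.not_ge
  · rintro ⟨hmaj, hsup⟩
    constructor
    · intro y
      refine ⟨fun x hx => hx.2, ?_⟩
      intro z hz
      obtain ⟨d, hdX, hyd⟩ := hmaj y
      obtain ⟨A, hA, hlub⟩ := hsup (d - y) (sub_nonneg.mpr hyd)
      have hub : d - z ∈ upperBounds A := by
        intro a ha
        obtain ⟨haX, _⟩ := hA ha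
        have had : a ≤ d - y := hlub.1 ha
        have hyda : y ≤ d - a := by
          have := sub_le_sub_left had (d)
          simpa using (le_sub_comm.mp had)
        have hzd : z ≤ d - a := hz ⟨X.sub_mem hdX haX, hyda⟩
        exact le_sub_comm.mp hzd
      have := hlub.2 hub
      exact (sub_le_sub_iff_left d).mp this
    · intro y hy
      obtain ⟨A, hA, hlub⟩ := hsup y hy.le
      by_contra h
      push_neg at h
      have hub : (0 : Y) ∈ upperBounds A := by
        intro a ha
        obtain ⟨haX, ha0⟩ := hA ha
        rcases eq_or_lt_of_le ha0 with heq | hlt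
        · exact heq.ge
        · exact absurd (h a haX hlt) (not_not.mpr (hlub.1 ha))
      exact absurd (hlub.2 hub) hy.not_ge
end

section
/- Let Y be a vector lattice and X a linear subspace of Y that is directed, order dense in Y, and generates Y as a vector lattice. Then for every y ∈ Y: 0 ≤ y if and only if for every two nonempty finite sets A, B ⊆ {x ∈ X | 0 ≤ x} with y = (sup A) − (sup B) (suprema in Y) one has Aᵘ ⊆ Bᵘ, where for M ⊆ X the set Mᵘ := {x ∈ X | ∀ m ∈ M, m ≤ x} denotes the upper bounds of M within X. -/
/-!
Write `y = sup A - sup B` with `A, B ⊆ X`. Translating `A` and `B` by one `c ∈ X` dominating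
`0` and every `-s` (`s ∈ A ∪ B`), which exists because `X` is directed, makes both sets positive
without changing `y`. For positive representations, `Aᵘ ⊆ Bᵘ` says that every `x ∈ X` above
`sup A` lies above `sup B`, which by order density is equivalent to `sup B ≤ sup A`, i.e. `0 ≤ y`.
-/

open Set

theorem DirectedOn.exists_mem_le_and_forall_le {α : Type*} [Preorder α] {s : Set α}
    (hs : DirectedOn (· ≤ ·) s) {a : α} (ha : a ∈ s) (t : Finset α) (ht : ↑t ⊆ s) :
    ∃ z ∈ s, a ≤ z ∧ ∀ x ∈ t, x ≤ z := by
  classical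
  induction t using Finset.induction_on with
  | empty => exact ⟨a, ha, le_rfl, by simp⟩
  | @insert b t _ ih =>
    rw [Finset.coe_insert, insert_subset_iff] at ht
    obtain ⟨z, hzs, haz, htz⟩ := ih ht.2
    obtain ⟨w, hws, hbw, hzw⟩ := hs b ht.1 z hzs
    refine ⟨w, hws, haz.trans hzw, fun x hx => ?_⟩
    rcases Finset.mem_insert.mp hx with rfl | hx
    · exact hbw
    · exact (htz x hx).trans hzw

section LatticeOrderedGroup

variable {Y : Type*} [Lattice Y] [AddCommGroup Y] [CovariantClass Y Y (· + ·) (· ≤ ·)]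

theorem Finset.sup'_image_add_right [DecidableEq Y] {A : Finset Y} (hA : A.Nonempty) (c : Y) :
    (A.image (· + c)).sup' (hA.image _) id = A.sup' hA id + c := by
  rw [Finset.sup'_image]
  exact (map_finset_sup' (OrderIso.addRight c) hA id).symm

theorem AddSubgroup.exists_nonneg_sup'_sub_sup'_eq (X : AddSubgroup Y)
    (hX : DirectedOn (· ≤ ·) (X : Set Y)) {A B : Finset Y} (hA : A.Nonempty) (hB : B.Nonempty)
    (hAX : (↑A : Set Y) ⊆ X) (hBX : (↑B : Set Y) ⊆ X) :
    ∃ (A' B' : Finset Y) (hA' : A'.Nonempty) (hB' : B'.Nonempty),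
      (↑A' : Set Y) ⊆ {x | x ∈ X ∧ 0 ≤ x} ∧ (↑B' : Set Y) ⊆ {x | x ∈ X ∧ 0 ≤ x} ∧
      A.sup' hA id - B.sup' hB id = A'.sup' hA' id - B'.sup' hB' id := by
  classical
  obtain ⟨c, hcX, -, hc⟩ := hX.exists_mem_le_and_forall_le X.zero_mem ((A ∪ B).image Neg.neg)
    (by
      rw [Finset.coe_image]
      rintro _ ⟨s, hs, rfl⟩
      rcases Finset.mem_union.mp hs with hs | hs
      exacts [X.neg_mem (hAX hs), X.neg_mem (hBX hs)])
  have shift_nonneg : ∀ S ⊆ A ∪ B, (↑S : Set Y) ⊆ X →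
      (↑(S.image (· + c)) : Set Y) ⊆ {x | x ∈ X ∧ 0 ≤ x} := by
    intro S hS hSX
    rw [Finset.coe_image]
    rintro _ ⟨s, hs, rfl⟩
    refine ⟨X.add_mem (hSX hs) hcX, ?_⟩
    rw [← neg_le_iff_add_nonneg']
    exact hc (-s) (Finset.mem_image_of_mem _ (hS hs))
  refine ⟨A.image (· + c), B.image (· + c), hA.image _, hB.image _,
    shift_nonneg A Finset.subset_union_left hAX, shift_nonneg B Finset.subset_union_right hBX, ?_⟩
  rw [Finset.sup'_image_add_right, Finset.sup'_image_add_right, add_sub_add_right_eq_sub]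

end LatticeOrderedGroup

theorem inter_Ici_subset_inter_Ici_iff {Y : Type*} [Preorder Y] {X : Set Y}
    (hdense : ∀ y, IsGLB (X ∩ Ici y) y) {a b : Y} : X ∩ Ici a ⊆ X ∩ Ici b ↔ b ≤ a :=
  ⟨fun h => (hdense a).2 fun _ hx => (h hx).2,
    fun h => inter_subset_inter_right X (Ici_subset_Ici.2 h)⟩

theorem inter_upperBounds_subset_inter_upperBounds_iff {Y : Type*} [SemilatticeSup Y]
    {X : Set Y} (hdense : ∀ y, IsGLB (X ∩ Ici y) y) {A B : Finset Y} (hA : A.Nonempty)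
    (hB : B.Nonempty) :
    X ∩ upperBounds ↑A ⊆ X ∩ upperBounds ↑B ↔ B.sup' hB id ≤ A.sup' hA id := by
  rw [(Finset.isLUB_sup' hA).upperBounds_eq, (Finset.isLUB_sup' hB).upperBounds_eq,
    inter_Ici_subset_inter_Ici_iff hdense]

theorem statement3_general
    {Y : Type*} [Lattice Y] [AddCommGroup Y] [Module ℝ Y]
    [CovariantClass Y Y (· + ·) (· ≤ ·)]
    (X : Submodule ℝ Y)
    (hdir : ∀ x ∈ X, ∀ y ∈ X, ∃ z ∈ X, x ≤ z ∧ y ≤ z)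
    (hdense : ∀ y : Y, IsGLB {x : Y | x ∈ X ∧ y ≤ x} y)
    (hgen : ∀ y : Y, ∃ A B : Finset Y, ∃ hA : A.Nonempty, ∃ hB : B.Nonempty,
      (↑A : Set Y) ⊆ (X : Set Y) ∧ (↑B : Set Y) ⊆ (X : Set Y) ∧
      y = A.sup' hA id - B.sup' hB id) :
    ∀ y : Y,
      0 ≤ y ↔
        ∀ (A B : Finset Y) (hA : A.Nonempty) (hB : B.Nonempty),
          (↑A : Set Y) ⊆ {x : Y | x ∈ X ∧ 0 ≤ x} →
          (↑B : Set Y) ⊆ {x : Y | x ∈ X ∧ 0 ≤ x} →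
          y = A.sup' hA id - B.sup' hB id →
          {x : Y | x ∈ X ∧ ∀ a ∈ A, a ≤ x} ⊆ {x : Y | x ∈ X ∧ ∀ b ∈ B, b ≤ x} := by
  intro y
  have nonneg_iff {A B : Finset Y} (hA : A.Nonempty) (hB : B.Nonempty)
      (hy : y = A.sup' hA id - B.sup' hB id) :
      0 ≤ y ↔ {x : Y | x ∈ X ∧ ∀ a ∈ A, a ≤ x} ⊆ {x : Y | x ∈ X ∧ ∀ b ∈ B, b ≤ x} := by
    rw [hy, sub_nonneg]
    exact (inter_upperBounds_subset_inter_upperBounds_iff (X := X) hdense hA hB).symm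
  refine ⟨fun hy A B hA hB _ _ hrep => (nonneg_iff hA hB hrep).1 hy, fun hcond => ?_⟩
  obtain ⟨A, B, hA, hB, hAX, hBX, hrep⟩ := hgen y
  obtain ⟨A', B', hA', hB', hA'X, hB'X, hrep'⟩ :=
    X.toAddSubgroup.exists_nonneg_sup'_sub_sup'_eq hdir hA hB hAX hBX
  have hy : y = A'.sup' hA' id - B'.sup' hB' id := hrep.trans hrep'
  exact (nonneg_iff hA' hB' hy).2 (hcond A' B' hA' hB' hA'X hB'X hy)

/-- Let `Y` be a vector lattice and `X` a directed, order dense linear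
subspace of `Y` that generates `Y` as a vector lattice. Then for every `y ∈ Y`: `0 ≤ y` iff
for all nonempty finite sets `A, B ⊆ {x ∈ X | 0 ≤ x}` with `y = sup A - sup B` one has
`Aᵘ ⊆ Bᵘ`, the upper bounds being taken within `X`. -/
theorem statement3
    {Y : Type*} [Lattice Y] [AddCommGroup Y] [Module ℝ Y]
    [CovariantClass Y Y (· + ·) (· ≤ ·)] [PosSMulMono ℝ Y]
    (X : Submodule ℝ Y)
    (hdir : ∀ x ∈ X, ∀ y ∈ X, ∃ z ∈ X, x ≤ z ∧ y ≤ z)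
    (hdense : ∀ y : Y, IsGLB {x : Y | x ∈ X ∧ y ≤ x} y)
    (hgen : ∀ y : Y, ∃ A B : Finset Y, ∃ hA : A.Nonempty, ∃ hB : B.Nonempty,
      (↑A : Set Y) ⊆ (X : Set Y) ∧ (↑B : Set Y) ⊆ (X : Set Y) ∧
      y = A.sup' hA id - B.sup' hB id) :
    ∀ y : Y,
      0 ≤ y ↔
        ∀ (A B : Finset Y) (hA : A.Nonempty) (hB : B.Nonempty),
          (↑A : Set Y) ⊆ {x : Y | x ∈ X ∧ 0 ≤ x} →
          (↑B : Set Y) ⊆ {x : Y | x ∈ X ∧ 0 ≤ x} →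
          y = A.sup' hA id - B.sup' hB id →
          {x : Y | x ∈ X ∧ ∀ a ∈ A, a ≤ x} ⊆ {x : Y | x ∈ X ∧ ∀ b ∈ B, b ≤ x} :=
  statement3_general X hdir hdense hgen
end

section
/- Let Y be a vector lattice and X a linear subspace of Y that is order dense in Y. Then the following are equivalent: (i) X is pervasive in Y; (ii) for every b₁, b₂ ∈ X with 0 < b₁ ⊔ b₂ (the supremum taken in Y) there exists x ∈ X with 0 < x ≤ b₁ ⊔ b₂; (iii) for every b ∈ X with 0 < b ⊔ 0 (the supremum taken in Y) there exists x ∈ X with 0 < x ≤ b ⊔ 0. -/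
/-- Let `Y` be a vector lattice and `X` an order dense linear subspace.
TFAE: (i) `X` is pervasive in `Y`; (ii) for all `b₁, b₂ ∈ X` with `0 < b₁ ⊔ b₂` (supremum in
`Y`) there is `x ∈ X` with `0 < x ≤ b₁ ⊔ b₂`; (iii) for every `b ∈ X` with `0 < b ⊔ 0`
there is `x ∈ X` with `0 < x ≤ b ⊔ 0`. -/
theorem statement6
    {Y : Type*} [Lattice Y] [AddCommGroup Y] [Module ℝ Y]
    [CovariantClass Y Y (· + ·) (· ≤ ·)] [PosSMulMono ℝ Y]
    (X : Submodule ℝ Y)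
    (hdense : ∀ y : Y, IsGLB {x : Y | x ∈ X ∧ y ≤ x} y) :
    List.TFAE
      [∀ y : Y, 0 < y → ∃ x ∈ X, 0 < x ∧ x ≤ y,
       ∀ b₁ ∈ X, ∀ b₂ ∈ X, 0 < b₁ ⊔ b₂ → ∃ x ∈ X, 0 < x ∧ x ≤ b₁ ⊔ b₂,
       ∀ b ∈ X, 0 < b ⊔ 0 → ∃ x ∈ X, 0 < x ∧ x ≤ b ⊔ 0] := by
  tfae_have 1 → 2 := by
    intro h1 b₁ _ b₂ _ hpos
    exact h1 _ hpos
  tfae_have 2 → 3 := by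
    intro h2 b hb hpos
    exact h2 b hb 0 X.zero_mem hpos
  tfae_have 3 → 1 := by
    intro h3 y hy
    -- first find a majorant of y in X
    have hA : ∃ a, a ∈ X ∧ y ≤ a := by
      by_contra h
      push_neg at h
      have hemp : {x : Y | x ∈ X ∧ y ≤ x} = (∅ : Set Y) := by
        ext x
        simp only [Set.mem_setOf_eq, Set.mem_empty_iff_false, iff_false, not_and]
        exact h x
      have := (hdense y).2 (by rw [hemp]; exact fun z hz => hz.elim : (y + y) ∈ lowerBounds {x : Y | x ∈ X ∧ y ≤ x})
      have : y < y + y := lt_add_of_pos_right y hy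
      exact absurd ((hdense y).2 (by rw [hemp]; exact fun z hz => hz.elim)) (not_le_of_gt this)
    obtain ⟨a, haX, hya⟩ := hA
    -- a is not a lower bound of majorants of a - y
    have hlt : a - y < a := sub_lt_self a hy
    have hnotlb : ¬ a ∈ lowerBounds {x : Y | x ∈ X ∧ a - y ≤ x} := by
      intro hlb
      exact absurd ((hdense (a - y)).2 hlb) (not_le_of_gt hlt)
    rw [lowerBounds, Set.mem_setOf_eq] at hnotlb
    push_neg at hnotlb
    obtain ⟨c, ⟨hcX, hayc⟩, hac⟩ := hnotlb
    set b := a - c with hbdef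
    have hbX : b ∈ X := X.sub_mem haX hcX
    have hby : b ≤ y := sub_le_comm.mp hayc
    have hb0 : 0 < b ⊔ 0 := by
      rcases lt_or_eq_of_le (le_sup_right : (0:Y) ≤ b ⊔ 0) with h | h
      · exact h
      · exfalso
        apply hac
        have hble : b ≤ 0 := by
          have : b ⊔ 0 = 0 := h.symm
          calc b ≤ b ⊔ 0 := le_sup_left
          _ = 0 := this
        exact sub_nonpos.mp hble
    obtain ⟨x, hxX, hx0, hxle⟩ := h3 b hbX hb0
    exact ⟨x, hxX, hx0, hxle.trans (sup_le hby hy.le)⟩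
  tfae_finish
end

section
/- Let Y be an Archimedean vector lattice and X a linear subspace of Y that is order dense in Y. Then the following are equivalent: (i) X is pervasive in Y; (ii) for every b₁, b₂ ∈ X such that every u ∈ X with b₁ ≤ u and b₂ ≤ u satisfies 0 < u, there exists x ∈ X such that every u ∈ X with b₁ ≤ u and b₂ ≤ u satisfies 0 < x ≤ u; (iii) for every b ∈ X with ¬(b ≤ 0), there exists x ∈ X such that every u ∈ X with 0 ≤ u and b ≤ u satisfies 0 < x ≤ u. -/
/-- Let `Y` be an Archimedean vector lattice and `X` an order dense linear
subspace. TFAE: (i) `X` is pervasive in `Y`; (ii) for all `b₁, b₂ ∈ X` such that every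
common upper bound `u ∈ X` of `b₁, b₂` satisfies `0 < u`, there is `x ∈ X` such that every
common upper bound `u ∈ X` of `b₁, b₂` satisfies `0 < x ≤ u`; (iii) for every `b ∈ X` with
`¬(b ≤ 0)` there is `x ∈ X` such that every `u ∈ X` with `0 ≤ u` and `b ≤ u` satisfies
`0 < x ≤ u`. -/
theorem statement7
    {Y : Type*} [Lattice Y] [AddCommGroup Y] [Module ℝ Y]
    [CovariantClass Y Y (· + ·) (· ≤ ·)] [PosSMulMono ℝ Y]
    (hArch : ∀ x y : Y, (∀ n : ℕ, n • x ≤ y) → x ≤ 0)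
    (X : Submodule ℝ Y)
    (hdense : ∀ y : Y, IsGLB {x : Y | x ∈ X ∧ y ≤ x} y) :
    List.TFAE
      [∀ y : Y, 0 < y → ∃ x ∈ X, 0 < x ∧ x ≤ y,
       ∀ b₁ ∈ X, ∀ b₂ ∈ X, (∀ u ∈ X, b₁ ≤ u → b₂ ≤ u → 0 < u) →
         ∃ x ∈ X, ∀ u ∈ X, b₁ ≤ u → b₂ ≤ u → 0 < x ∧ x ≤ u,
       ∀ b ∈ X, ¬(b ≤ 0) →
         ∃ x ∈ X, ∀ u ∈ X, 0 ≤ u → b ≤ u → 0 < x ∧ x ≤ u] := by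
  tfae_have 1 → 2 := by
    intro h1 b₁ hb₁ b₂ hb₂ hpos
    have hglb := hdense (b₁ ⊔ b₂)
    have h0y : (0 : Y) ≤ b₁ ⊔ b₂ :=
      hglb.2 fun u hu =>
        (hpos u hu.1 (le_sup_left.trans hu.2) (le_sup_right.trans hu.2)).le
    have hy0 : b₁ ⊔ b₂ ≠ 0 := by
      intro h
      have h0S : b₁ ≤ (0 : Y) := h ▸ le_sup_left
      have h0S' : b₂ ≤ (0 : Y) := h ▸ le_sup_right
      exact absurd (hpos 0 X.zero_mem h0S h0S') (lt_irrefl 0)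
    obtain ⟨x, hxX, hx0, hxy⟩ := h1 (b₁ ⊔ b₂) (h0y.lt_of_ne (Ne.symm hy0))
    exact ⟨x, hxX, fun u _ h1u h2u => ⟨hx0, hxy.trans (sup_le h1u h2u)⟩⟩
  tfae_have 2 → 3 := by
    intro h2 b hbX hb0
    obtain ⟨x, hxX, hx⟩ := h2 0 X.zero_mem b hbX (fun u _ h0u hbu =>
      h0u.lt_of_ne fun h => hb0 (by rw [← h] at hbu; exact hbu))
    exact ⟨x, hxX, fun u hu h0u hbu => hx u hu h0u hbu⟩
  tfae_have 3 → 1 := by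
    intro h3 y hy
    have hglb := hdense y
    obtain ⟨a, haX, hya⟩ : ∃ a, a ∈ X ∧ y ≤ a := by
      by_contra h
      push_neg at h
      have hlb : y + y ≤ y := hglb.2 fun u hu => absurd hu.2 (h u hu.1)
      exact hy.not_ge (add_le_iff_nonpos_left.mp hlb)
    obtain ⟨b, hbX, hby, hb0⟩ : ∃ b, b ∈ X ∧ b ≤ y ∧ ¬ b ≤ 0 := by
      by_contra h
      push_neg at h
      have hc := hdense (a - y)
      have haay : a ≤ a - y := hc.2 fun u hu => by
        have hauy : a - u ≤ y := sub_le_comm.mp hu.2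
        exact sub_nonpos.mp (h (a - u) (X.sub_mem haX hu.1) hauy)
      exact hy.not_ge ((le_sub_self_iff a).mp haay)
    obtain ⟨x, hxX, hx⟩ := h3 b hbX hb0
    have hx0 : 0 < x := (hx a haX (hy.le.trans hya) (hby.trans hya)).1
    have hxb : x ≤ b ⊔ 0 := (hdense (b ⊔ 0)).2 fun u hu =>
      (hx u hu.1 (le_sup_right.trans hu.2) (le_sup_left.trans hu.2)).2
    exact ⟨x, hxX, hx0, hxb.trans (sup_le hby hy.le)⟩
  tfae_finish
end

section
/- Let Y be a vector lattice and X a linear subspace of Y that is order dense in Y. Then the following are equivalent: (i) X is weakly pervasive in Y; (ii) for every a, b₁, b₂ ∈ X with a < b₁ ⊓ b₂ (the infimum taken in Y) there exists x ∈ X with a < x, x ≤ b₁ and x ≤ b₂; (iii) for every b₁, b₂ ∈ X with 0 < b₁, 0 < b₂ and b₁ ⊓ b₂ ≠ 0 (the infimum taken in Y) there exists x ∈ X with 0 < x, x ≤ b₁ and x ≤ b₂. -/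
/-- Let `Y` be a vector lattice and `X` an order dense linear subspace.
TFAE: (i) `X` is weakly pervasive in `Y`; (ii) for all `a, b₁, b₂ ∈ X` with `a < b₁ ⊓ b₂`
(infimum in `Y`) there is `x ∈ X` with `a < x ≤ b₁, b₂`; (iii) for all `b₁, b₂ ∈ X` with
`0 < b₁`, `0 < b₂` and `b₁ ⊓ b₂ ≠ 0` there is `x ∈ X` with `0 < x ≤ b₁, b₂`. -/
theorem statement8
    {Y : Type*} [Lattice Y] [AddCommGroup Y] [Module ℝ Y]
    [CovariantClass Y Y (· + ·) (· ≤ ·)] [PosSMulMono ℝ Y]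
    (X : Submodule ℝ Y)
    (hdense : ∀ y : Y, IsGLB {x : Y | x ∈ X ∧ y ≤ x} y) :
    List.TFAE
      [∀ b₁ ∈ X, ∀ b₂ ∈ X, 0 < b₁ ⊓ b₂ → ∃ x ∈ X, 0 < x ∧ x ≤ b₁ ⊓ b₂,
       ∀ a ∈ X, ∀ b₁ ∈ X, ∀ b₂ ∈ X, a < b₁ ⊓ b₂ →
         ∃ x ∈ X, a < x ∧ x ≤ b₁ ∧ x ≤ b₂,
       ∀ b₁ ∈ X, ∀ b₂ ∈ X, 0 < b₁ → 0 < b₂ → b₁ ⊓ b₂ ≠ 0 →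
         ∃ x ∈ X, 0 < x ∧ x ≤ b₁ ∧ x ≤ b₂] := by
  tfae_have 1 → 2 := by
    intro h1 a ha b₁ hb₁ b₂ hb₂ hlt
    have key : (0:Y) < (b₁ - a) ⊓ (b₂ - a) := by
      have : (b₁ - a) ⊓ (b₂ - a) = b₁ ⊓ b₂ - a := by
        simp only [sub_eq_add_neg]
        exact ((OrderIso.addRight (-a) : Y ≃o Y).map_inf b₁ b₂).symm
      rw [this, lt_sub_iff_add_lt]
      simpa using hlt
    obtain ⟨x, hx, hx0, hxle⟩ := h1 (b₁ - a) (X.sub_mem hb₁ ha) (b₂ - a) (X.sub_mem hb₂ ha) key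
    refine ⟨x + a, X.add_mem hx ha, by simpa using hx0, ?_, ?_⟩
    · exact add_le_of_le_sub_right (hxle.trans inf_le_left)
    · exact add_le_of_le_sub_right (hxle.trans inf_le_right)
  tfae_have 2 → 3 := by
    intro h2 b₁ hb₁ b₂ hb₂ h1 h2' hne
    have : (0:Y) < b₁ ⊓ b₂ := lt_of_le_of_ne (le_inf h1.le h2'.le) (Ne.symm hne)
    exact h2 0 X.zero_mem b₁ hb₁ b₂ hb₂ this
  tfae_have 3 → 1 := by
    intro h3 b₁ hb₁ b₂ hb₂ hlt
    have hb1 : (0:Y) < b₁ := hlt.trans_le inf_le_left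
    have hb2 : (0:Y) < b₂ := hlt.trans_le inf_le_right
    obtain ⟨x, hx, hx0, hle1, hle2⟩ := h3 b₁ hb₁ b₂ hb₂ hb1 hb2 (ne_of_gt hlt)
    exact ⟨x, hx, hx0, le_inf hle1 hle2⟩
  tfae_finish
end

section
/- Let Y be a vector lattice and X a linear subspace of Y that is order dense in Y. If X has the Riesz decomposition property, then X is weakly pervasive in Y. -/
/-!
Since `b₁ ⊓ b₂ + b₁ ⊔ b₂ = b₁ + b₂`, positivity of `b₁ ⊓ b₂` gives `b₁ ⊔ b₂ < b₁ + b₂`, so by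
order density some `a ∈ X` lies above `b₁ ⊔ b₂` but not above `b₁ + b₂`. Decomposing
`b₁ ≤ (a - b₂) + b₂` by the Riesz property as `b₁ = z₁ + z₂` with `z₁ ≤ a - b₂` and `z₂ ≤ b₂`,
the piece `z₂` lies below `b₁` and `b₂`, and it is nonzero because `b₁ ≤ a - b₂` fails.
-/

def HasRieszDecomposition {Y : Type*} [Zero Y] [Add Y] [LE Y] (X : Set Y) : Prop :=
  ∀ x₁ ∈ X, ∀ x₂ ∈ X, ∀ z ∈ X, 0 ≤ x₁ → 0 ≤ x₂ → 0 ≤ z → z ≤ x₁ + x₂ →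
    ∃ z₁ ∈ X, ∃ z₂ ∈ X, 0 ≤ z₁ ∧ z₁ ≤ x₁ ∧ 0 ≤ z₂ ∧ z₂ ≤ x₂ ∧ z = z₁ + z₂

theorem sup_lt_add_of_inf_pos {Y : Type*} [Lattice Y] [AddCommGroup Y] [AddLeftMono Y]
    {a b : Y} (h : 0 < a ⊓ b) : a ⊔ b < a + b := by
  rw [← inf_add_sup a b]
  exact lt_add_of_pos_left _ h

theorem IsGLB.exists_not_le_of_not_le {α : Type*} [Preorder α] {s : Set α} {a b : α}
    (h : IsGLB s a) (hba : ¬b ≤ a) : ∃ x ∈ s, ¬b ≤ x := by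
  by_contra! hle
  exact hba (h.2 hle)

theorem HasRieszDecomposition.exists_pos_le_of_not_add_le {Y : Type*} [AddCommGroup Y]
    [PartialOrder Y] [AddLeftMono Y] {X : AddSubgroup Y} (hX : HasRieszDecomposition (X : Set Y))
    {a b₁ b₂ : Y} (ha : a ∈ X) (hb₁ : b₁ ∈ X) (hb₂ : b₂ ∈ X) (hb₁0 : 0 ≤ b₁) (hb₂0 : 0 ≤ b₂)
    (hb₁a : b₁ ≤ a) (hb₂a : b₂ ≤ a) (hna : ¬b₁ + b₂ ≤ a) :
    ∃ z ∈ X, 0 < z ∧ z ≤ b₁ ∧ z ≤ b₂ := by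
  obtain ⟨z₁, -, z₂, hz₂, hz₁0, hz₁, hz₂0, hz₂b, rfl⟩ :=
    hX (a - b₂) (X.sub_mem ha hb₂) b₂ hb₂ b₁ hb₁ (sub_nonneg.mpr hb₂a) hb₂0 hb₁0
      (by rwa [sub_add_cancel])
  refine ⟨z₂, hz₂, hz₂0.lt_of_ne ?_, le_add_of_nonneg_left hz₁0, hz₂b⟩
  rintro rfl
  exact hna (by simpa [le_sub_iff_add_le] using hz₁)

theorem statement9_general
    {Y : Type*} [Lattice Y] [AddCommGroup Y] [Module ℝ Y]
    [CovariantClass Y Y (· + ·) (· ≤ ·)]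
    (X : Submodule ℝ Y)
    (hdense : ∀ y : Y, IsGLB {x : Y | x ∈ X ∧ y ≤ x} y)
    (hRDP : ∀ x₁ ∈ X, ∀ x₂ ∈ X, ∀ z ∈ X, 0 ≤ x₁ → 0 ≤ x₂ → 0 ≤ z → z ≤ x₁ + x₂ →
      ∃ z₁ ∈ X, ∃ z₂ ∈ X, 0 ≤ z₁ ∧ z₁ ≤ x₁ ∧ 0 ≤ z₂ ∧ z₂ ≤ x₂ ∧ z = z₁ + z₂) :
    ∀ b₁ ∈ X, ∀ b₂ ∈ X, 0 < b₁ ⊓ b₂ → ∃ x ∈ X, 0 < x ∧ x ≤ b₁ ⊓ b₂ := by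
  intro b₁ hb₁ b₂ hb₂ hpos
  obtain ⟨a, ⟨ha, hsup⟩, hna⟩ :=
    (hdense (b₁ ⊔ b₂)).exists_not_le_of_not_le (sup_lt_add_of_inf_pos hpos).not_ge
  have hX : HasRieszDecomposition (X.toAddSubgroup : Set Y) := hRDP
  obtain ⟨z, hz, hz0, hzb₁, hzb₂⟩ :=
    hX.exists_pos_le_of_not_add_le ha hb₁ hb₂ (hpos.le.trans inf_le_left)
      (hpos.le.trans inf_le_right) (le_sup_left.trans hsup) (le_sup_right.trans hsup) hna
  exact ⟨z, hz, hz0, le_inf hzb₁ hzb₂⟩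

/-- Let `Y` be a vector lattice and `X` an order dense linear subspace of
`Y`. If `X` has the Riesz decomposition property, then `X` is weakly pervasive in `Y`. -/
theorem statement9
    {Y : Type*} [Lattice Y] [AddCommGroup Y] [Module ℝ Y]
    [CovariantClass Y Y (· + ·) (· ≤ ·)] [PosSMulMono ℝ Y]
    (X : Submodule ℝ Y)
    (hdense : ∀ y : Y, IsGLB {x : Y | x ∈ X ∧ y ≤ x} y)
    (hRDP : ∀ x₁ ∈ X, ∀ x₂ ∈ X, ∀ z ∈ X, 0 ≤ x₁ → 0 ≤ x₂ → 0 ≤ z → z ≤ x₁ + x₂ →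
      ∃ z₁ ∈ X, ∃ z₂ ∈ X, 0 ≤ z₁ ∧ z₁ ≤ x₁ ∧ 0 ≤ z₂ ∧ z₂ ≤ x₂ ∧ z = z₁ + z₂) :
    ∀ b₁ ∈ X, ∀ b₂ ∈ X, 0 < b₁ ⊓ b₂ → ∃ x ∈ X, 0 < x ∧ x ≤ b₁ ⊓ b₂ :=
  statement9_general X hdense hRDP
end

section
/- Let X := {x : ℤ → ℝ | x is bounded and ∑_{k=1}^∞ x(−k)/2^k = lim_{i→+∞} x(i)} (in particular the limit of x(i) as i → +∞ exists and equals the sum of the absolutely convergent series ∑_{k=1}^∞ x(−k)/2^k), ordered pointwise. Then for all b, c ∈ X with 0 < b, 0 < c (i.e. b and c are pointwise nonnegative and nonzero) such that there exists j ∈ ℤ with b(j) > 0 and c(j) > 0, there exists x ∈ X with 0 < x, x ≤ b and x ≤ c (all inequalities pointwise). Consequently X is weakly pervasive. -/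
open Filter Topology

/-!
Take a peak of height `a`, `0 < a < min (b j) (c j)`, at `j`, and append a constant tail `ε` on
`[N, ∞)` with `N ≥ 0`, where `ε` is the weighted left sum of the peak (`a / 2^k` if `j = -k`, and
`0` if `j ≥ 0`). The tail does not touch negative indices, so the function lies in `X`. It stays
below `b` since `b ≥ 0` and `lim b = ∑ b(-k)/2^k ≥ b(j)/2^k > ε` when `j = -k < 0`, so that `b ≥ ε`
eventually; likewise for `c`.
-/

/-- Membership in the pre-Riesz space `X` of Example 10: bounded functions `x : ℤ → ℝ` such
that `∑_{k=1}^∞ x(-k)/2^k = lim_{i→∞} x(i)` (in particular this limit exists). -/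
def MemX10 (x : ℤ → ℝ) : Prop :=
  (∃ M : ℝ, ∀ i : ℤ, |x i| ≤ M) ∧
    Tendsto x atTop (𝓝 (∑' k : ℕ, x (-((k : ℤ) + 1)) / 2 ^ (k + 1)))

noncomputable def leftSum (x : ℤ → ℝ) : ℝ := ∑' k : ℕ, x (-((k : ℤ) + 1)) / 2 ^ (k + 1)

lemma summable_leftSum {x : ℤ → ℝ} {M : ℝ} (hM : ∀ i, |x i| ≤ M) :
    Summable fun k : ℕ => x (-((k : ℤ) + 1)) / 2 ^ (k + 1) := by
  refine Summable.of_norm_bounded ((summable_geometric_two.comp_injective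
    (add_left_injective 1)).mul_left M) fun k => ?_
  rw [Real.norm_eq_abs, abs_div, abs_of_pos (by positivity : (0 : ℝ) < 2 ^ (k + 1)),
    Function.comp_apply, one_div_pow, ← div_eq_mul_one_div]
  exact div_le_div_of_nonneg_right (hM _) (by positivity)

lemma leftSum_congr {x y : ℤ → ℝ} (h : ∀ i < 0, x i = y i) : leftSum x = leftSum y :=
  tsum_congr fun k => by rw [h _ (by omega)]

lemma leftSum_single_of_nonneg {j : ℤ} (hj : 0 ≤ j) (a : ℝ) : leftSum (Pi.single j a) = 0 := by
  rw [leftSum_congr (y := 0) fun i hi => by simp [show i ≠ j by omega]]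
  simp [leftSum]

lemma leftSum_nonneg {x : ℤ → ℝ} (hx : 0 ≤ x) : 0 ≤ leftSum x :=
  tsum_nonneg fun k => div_nonneg (hx _) (by positivity)

lemma leftSum_single_lt {x : ℤ → ℝ} {M : ℝ} (hM : ∀ i, |x i| ≤ M) (hx : 0 ≤ x) {j : ℤ}
    (hj : j < 0) {a : ℝ} (ha : a < x j) : leftSum (Pi.single j a) < leftSum x := by
  obtain ⟨k, rfl⟩ : ∃ k : ℕ, j = -((k : ℤ) + 1) := ⟨(-j - 1).toNat, by omega⟩
  rw [leftSum, tsum_eq_single k fun n hn => by rw [Pi.single_eq_of_ne (by omega), zero_div],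
    Pi.single_eq_same]
  calc a / 2 ^ (k + 1) < x (-((k : ℤ) + 1)) / 2 ^ (k + 1) := by gcongr
    _ ≤ leftSum x := (summable_leftSum hM).le_tsum k fun n _ => div_nonneg (hx _) (by positivity)

lemma MemX10.eventually_leftSum_single_le {x : ℤ → ℝ} (hx : MemX10 x) (hx0 : 0 ≤ x) {j : ℤ}
    {a : ℝ} (ha : a < x j) : ∀ᶠ i in atTop, leftSum (Pi.single j a) ≤ x i := by
  obtain ⟨⟨M, hM⟩, hlim⟩ := hx
  rcases lt_or_ge j 0 with hj | hj
  · exact (hlim.eventually (eventually_gt_nhds (leftSum_single_lt hM hx0 hj ha))).mono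
      fun i hi => hi.le
  · exact Eventually.of_forall fun i => (leftSum_single_of_nonneg hj a).trans_le (hx0 i)

def peakWithTail (j : ℤ) (a ε : ℝ) (N : ℤ) : ℤ → ℝ :=
  fun i => if i = j then a else if N ≤ i then ε else 0

lemma leftSum_peakWithTail {N : ℤ} (hN : 0 ≤ N) (j : ℤ) (a ε : ℝ) :
    leftSum (peakWithTail j a ε N) = leftSum (Pi.single j a) :=
  leftSum_congr fun i hi => by
    by_cases h : i = j
    · simp [peakWithTail, h]
    · simp [peakWithTail, h, Pi.single_eq_of_ne, show ¬ N ≤ i by omega]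

lemma memX10_peakWithTail {j N : ℤ} (hN : 0 ≤ N) (hjN : j < N) (a : ℝ) :
    MemX10 (peakWithTail j a (leftSum (Pi.single j a)) N) := by
  refine ⟨⟨max |a| |leftSum (Pi.single j a)|, fun i => ?_⟩, ?_⟩
  · unfold peakWithTail
    split_ifs
    exacts [le_max_left _ _, le_max_right _ _, abs_zero.trans_le (le_max_of_le_left (abs_nonneg a))]
  · change Tendsto _ atTop (𝓝 (leftSum _))
    rw [leftSum_peakWithTail hN]
    refine tendsto_const_nhds.congr' ((eventually_ge_atTop N).mono fun i hi => ?_)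
    simp [peakWithTail, hi, show i ≠ j by omega]

lemma peakWithTail_pos {j N : ℤ} {a ε : ℝ} (ha : 0 < a) (hε : 0 ≤ ε) :
    0 < peakWithTail j a ε N := by
  refine Pi.lt_def.mpr ⟨fun i => ?_, j, by simpa [peakWithTail] using ha⟩
  unfold peakWithTail
  split_ifs
  exacts [ha.le, hε, le_rfl]

lemma peakWithTail_le {x : ℤ → ℝ} (hx0 : 0 ≤ x) {j N : ℤ} {a ε : ℝ} (ha : a ≤ x j)
    (hε : ∀ i ≥ N, ε ≤ x i) : peakWithTail j a ε N ≤ x := fun i => by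
  unfold peakWithTail
  split_ifs with hij hNi
  · exact hij ▸ ha
  · exact hε i hNi
  · exact hx0 i

/-- For all `b, c ∈ X` with `0 < b`, `0 < c` (pointwise) such that
`b(j) > 0` and `c(j) > 0` for some `j ∈ ℤ`, there exists `x ∈ X` with `0 < x`, `x ≤ b`
and `x ≤ c`.  Consequently `X` is weakly pervasive. -/
theorem statement10 :
    ∀ b c : ℤ → ℝ, MemX10 b → MemX10 c → 0 < b → 0 < c →
      (∃ j : ℤ, 0 < b j ∧ 0 < c j) →
      ∃ x : ℤ → ℝ, MemX10 x ∧ 0 < x ∧ x ≤ b ∧ x ≤ c := by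
  rintro b c hb hc hb0 hc0 ⟨j, hbj, hcj⟩
  obtain ⟨a, ha, hab, hac⟩ : ∃ a, 0 < a ∧ a < b j ∧ a < c j := by
    obtain ⟨a, ha, habc⟩ := exists_between (lt_min hbj hcj)
    exact ⟨a, ha, lt_min_iff.mp habc⟩
  obtain ⟨N, hN⟩ := eventually_atTop.mp <|
    (hb.eventually_leftSum_single_le hb0.le hab).and <|
    (hc.eventually_leftSum_single_le hc0.le hac).and <|
    (eventually_ge_atTop 0).and (eventually_gt_atTop j)
  obtain ⟨-, -, hN0, hjN⟩ := hN N le_rfl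
  exact ⟨peakWithTail j a (leftSum (Pi.single j a)) N, memX10_peakWithTail hN0 hjN a,
    peakWithTail_pos ha (leftSum_nonneg (Pi.single_nonneg.mpr ha.le)),
    peakWithTail_le hb0.le hab.le fun i hi => (hN i hi).1,
    peakWithTail_le hc0.le hac.le fun i hi => (hN i hi).2.1⟩
end

section
/- Let X := {f ∈ C([0,1], ℝ) | ∃ real polynomials p, q such that q(t) ≠ 0 for all t ∈ [0,1] and f(t) = p(t)/q(t) for all t ∈ [0,1]}, ordered pointwise. Define b ∈ X by b(t) := −16(t − 1/4)² + 1. Then ¬(b ≤ 0), and there exists no x ∈ X such that for every u ∈ X with 0 ≤ u and b ≤ u one has 0 < x ≤ u. (Consequently X, which is an Archimedean pre-Riesz space, is not pervasive.) -/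
open Set

/-- Membership in the space `X` of continuous rational functions on `[0,1]`:
`f = p/q` for polynomials `p, q` with `q` nowhere zero on `[0,1]`. -/
def MemX12 (f : C(Icc (0:ℝ) 1, ℝ)) : Prop :=
  ∃ p q : Polynomial ℝ, (∀ t : Icc (0:ℝ) 1, q.eval (t : ℝ) ≠ 0) ∧
    ∀ t : Icc (0:ℝ) 1, f t = p.eval (t : ℝ) / q.eval (t : ℝ)

/-- The parabola `b(t) = -16 (t - 1/4)² + 1` as a continuous function on `[0,1]`. -/
noncomputable def b12 : C(Icc (0:ℝ) 1, ℝ) :=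
  ⟨fun t => -16 * ((t : ℝ) - 1 / 4) ^ 2 + 1, by fun_prop⟩

/-- `b ∈ X`, `¬(b ≤ 0)`, and there is no `x ∈ X` such that every `u ∈ X`
with `0 ≤ u` and `b ≤ u` satisfies `0 < x ≤ u`.  Consequently `X` is not pervasive. -/
theorem statement12 :
    MemX12 b12 ∧ ¬(b12 ≤ 0) ∧
      ¬∃ x : C(Icc (0:ℝ) 1, ℝ), MemX12 x ∧
        ∀ u : C(Icc (0:ℝ) 1, ℝ), MemX12 u → 0 ≤ u → b12 ≤ u → 0 < x ∧ x ≤ u := by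
  refine ⟨?_, ?_, ?_⟩
  · refine ⟨Polynomial.C (-16) * (Polynomial.X - Polynomial.C (1/4)) ^ 2 + 1, 1,
      fun t => by simp, fun t => ?_⟩
    simp [b12]
  · intro h
    have h1 := h ⟨1/4, by norm_num, by norm_num⟩
    simp [b12] at h1
    norm_num at h1
  · rintro ⟨x, ⟨p, q, hq, hpq⟩, hx⟩
    -- first get `0 < x` from the admissible function `u = 1`
    have hone : MemX12 (1 : C(Icc (0:ℝ) 1, ℝ)) :=
      ⟨1, 1, fun t => by simp, fun t => by simp⟩
    have hb1 : b12 ≤ (1 : C(Icc (0:ℝ) 1, ℝ)) := by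
      intro t
      have ht : (0:ℝ) ≤ ((t:ℝ) - 1/4)^2 := sq_nonneg _
      simp [b12]
      nlinarith
    have hxpos : 0 < x := (hx 1 hone (by intro t; simp) hb1).1
    -- key : x vanishes on (1/2, 1]
    have key : ∀ t0 : Icc (0:ℝ) 1, (1/2 : ℝ) < (t0:ℝ) → x t0 = 0 := by
      intro t0 ht0
      set c : ℝ := ((t0:ℝ) - 1/2)^2 with hc_def
      have hc : 0 < c := by
        have : (0:ℝ) < (t0:ℝ) - 1/2 := by linarith
        positivity
      set u : C(Icc (0:ℝ) 1, ℝ) := ⟨fun t => ((t:ℝ) - (t0:ℝ))^2 / c, by fun_prop⟩ with hu_def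
      have hmem : MemX12 u := by
        refine ⟨(Polynomial.X - Polynomial.C ((t0:ℝ)))^2, Polynomial.C c,
          fun t => by simp [hc.ne'], fun t => by simp [u]⟩
      have hu0 : (0:C(Icc (0:ℝ) 1, ℝ)) ≤ u := by
        intro t
        simp only [hu_def, ContinuousMap.coe_mk, ContinuousMap.zero_apply]
        positivity
      have hbu : b12 ≤ u := by
        intro t
        have ht1 : (0:ℝ) ≤ (t:ℝ) := t.2.1
        have ht2 : (t:ℝ) ≤ 1 := t.2.2
        simp only [hu_def, ContinuousMap.coe_mk, b12]
        rw [le_div_iff₀ hc]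
        by_cases h : (t:ℝ) < 1/2
        · nlinarith [sq_nonneg ((t:ℝ) - 1/4), sq_nonneg ((t0:ℝ) - (t:ℝ) - ((t0:ℝ) - 1/2)),
            sq_nonneg ((t:ℝ) - (t0:ℝ))]
        · push_neg at h
          have hb0 : -16 * ((t:ℝ) - 1/4)^2 + 1 ≤ 0 := by nlinarith
          have hm : (-16 * ((t:ℝ) - 1/4)^2 + 1) * c ≤ 0 :=
            mul_nonpos_of_nonpos_of_nonneg hb0 hc.le
          have := sq_nonneg ((t:ℝ) - (t0:ℝ))
          linarith
      obtain ⟨_, hxu⟩ := hx u hmem hu0 hbu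
      have h1 : x t0 ≤ u t0 := hxu t0
      have h2 : (0:ℝ) ≤ x t0 := hxpos.le t0
      have h3 : u t0 = 0 := by simp [hu_def]
      rw [h3] at h1
      linarith
    -- hence p vanishes on an infinite set, so p = 0
    have hp : p = 0 := by
      apply Polynomial.eq_zero_of_infinite_isRoot
      apply Set.Infinite.mono (s := Set.Ioc (1/2 : ℝ) 1)
      · intro r hr
        have hr1 : (1/2:ℝ) < r := hr.1
        have hr2 : r ≤ 1 := hr.2
        have hmem : r ∈ Icc (0:ℝ) 1 := ⟨by linarith, hr2⟩
        have h0 := key ⟨r, hmem⟩ hr1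
        rw [hpq ⟨r, hmem⟩] at h0
        have := hq ⟨r, hmem⟩
        simp only [Polynomial.IsRoot, Set.mem_setOf_eq]
        exact (div_eq_zero_iff.mp h0).resolve_right this
      · exact Set.Ioc_infinite (by norm_num)
    -- then x = 0, contradicting 0 < x
    have hx0 : x = 0 := by
      ext t
      rw [hpq t, hp]
      simp
    exact hxpos.ne' hx0
end

section
/- Let PA[−1,1] denote the continuous piecewise affine functions on [−1,1], i.e. those f ∈ C([−1,1], ℝ) for which there exist points −1 = t₀ < t₁ < … < t_m = 1 such that f is affine on each interval [t_{j−1}, t_j]. Let q ∈ C([−1,1], ℝ) be q(t) := t², and let X := {f + λ·q | f ∈ PA[−1,1], λ ∈ ℝ} ⊆ C([−1,1], ℝ), ordered pointwise. Then X satisfies property (P): for every n ≥ 1 and all b₁, …, b_n ∈ X with 0 < bᵢ for each i and with min(b₁, …, b_n) ≠ 0 (the pointwise minimum in C([−1,1], ℝ)), there exists x ∈ X with 0 < x and x ≤ bᵢ for all i = 1, …, n. -/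
/-!
Let `g` be the pointwise minimum of the `bᵢ`. It is nonnegative and not identically zero, so
`g > ε` on a closed interval `[p - δ, p + δ]` inside `(-1, 1)`. The tent function of height `ε`
supported on that interval is piecewise affine, hence in `X`; it is positive and lies below `g`,
hence below every `bᵢ`.
-/

open Set

/-- `f ∈ C([-1,1], ℝ)` is piecewise affine: there are points
`-1 = t₀ < t₁ < … < t_m = 1` such that `f` is affine on each `[t_{j-1}, t_j]`. -/
def PA14 (f : C(Icc (-1:ℝ) 1, ℝ)) : Prop :=
  ∃ m : ℕ, 0 < m ∧ ∃ t : ℕ → ℝ, t 0 = -1 ∧ t m = 1 ∧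
    (∀ j < m, t j < t (j + 1)) ∧
    ∀ j < m, ∃ a c : ℝ, ∀ s : Icc (-1:ℝ) 1,
      t j ≤ (s : ℝ) → (s : ℝ) ≤ t (j + 1) → f s = a * (s : ℝ) + c

/-- The function `q(t) = t²` on `[-1,1]`. -/
noncomputable def q14 : C(Icc (-1:ℝ) 1, ℝ) := ⟨fun t => (t : ℝ) ^ 2, by fun_prop⟩

/-- Membership in `X = PA[-1,1] ⊕ ℝ·q`. -/
def MemX14 (g : C(Icc (-1:ℝ) 1, ℝ)) : Prop :=
  ∃ (f : C(Icc (-1:ℝ) 1, ℝ)) (lam : ℝ), PA14 f ∧ g = f + lam • q14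

section Interval

variable {a b : ℝ}

theorem ContinuousMap.exists_Icc_subset_Ioo_forall_lt {g : C(Icc a b, ℝ)} (hab : a < b)
    {t₀ : Icc a b} {c : ℝ} (hc : c < g t₀) :
    ∃ p δ : ℝ, 0 < δ ∧ a < p - δ ∧ p + δ < b ∧
      ∀ s : Icc a b, |(s : ℝ) - p| ≤ δ → c < g s := by
  set G := ContinuousMap.IccExtend hab.le g
  have hG : ∀ s : Icc a b, G s = g s := IccExtend_val hab.le g
  set U := {s | c < G s} ∩ Ioo a b
  have hU : IsOpen U := (isOpen_lt continuous_const G.continuous).inter isOpen_Ioo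
  -- `t₀` may be an endpoint, but it lies in the closure of the interior `Ioo a b`.
  obtain ⟨p, hpU⟩ : U.Nonempty := by
    have ht₀ : (t₀ : ℝ) ∈ closure (Ioo a b) := by rw [closure_Ioo hab.ne]; exact t₀.2
    exact mem_closure_iff.mp ht₀ _ (isOpen_lt continuous_const G.continuous) (by simpa [hG])
  obtain ⟨r, hr, hball⟩ := Metric.isOpen_iff.mp hU p hpU
  have hmem : ∀ s : ℝ, |s - p| ≤ r / 2 → s ∈ U := fun s hs =>
    hball (by rw [Metric.mem_ball, Real.dist_eq]; linarith)
  refine ⟨p, r / 2, by positivity, (hmem (p - r / 2) ?_).2.1, (hmem (p + r / 2) ?_).2.2,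
    fun s hs => hG s ▸ (hmem s hs).1⟩
  · rw [sub_sub_cancel_left, abs_neg, abs_of_pos (by positivity)]
  · rw [add_sub_cancel_left, abs_of_pos (by positivity)]

noncomputable def tent (p δ h : ℝ) : C(Icc a b, ℝ) :=
  ⟨fun s => h * max 0 (1 - |(s : ℝ) - p| / δ), by fun_prop⟩

variable {p δ h : ℝ}

theorem tent_apply (s : Icc a b) : tent p δ h s = h * max 0 (1 - |(s : ℝ) - p| / δ) := rfl

theorem tent_nonneg (hh : 0 ≤ h) : 0 ≤ (tent p δ h : C(Icc a b, ℝ)) := fun _ =>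
  mul_nonneg hh (le_max_left _ _)

theorem tent_eq_zero_of_le (hδ : 0 < δ) {s : Icc a b} (hs : δ ≤ |(s : ℝ) - p|) :
    tent p δ h s = 0 := by
  rw [tent_apply, max_eq_left (by rwa [sub_nonpos, one_le_div hδ]), mul_zero]

theorem tent_le (hδ : 0 < δ) (hh : 0 ≤ h) (s : Icc a b) : tent p δ h s ≤ h := by
  rw [tent_apply]
  refine mul_le_of_le_one_right hh (max_le zero_le_one ?_)
  linarith [div_nonneg (abs_nonneg ((s : ℝ) - p)) hδ.le]

theorem tent_pos (hp : p ∈ Icc a b) (hh : 0 < h) : 0 < (tent p δ h : C(Icc a b, ℝ)) := by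
  refine lt_of_le_of_ne (tent_nonneg hh.le) fun h0 => ?_
  have := DFunLike.congr_fun h0 ⟨p, hp⟩
  rw [ContinuousMap.zero_apply, tent_apply, sub_self, abs_zero, zero_div, sub_zero,
    max_eq_right zero_le_one, mul_one] at this
  exact hh.ne this

theorem tent_le_of_forall_le {f : C(Icc a b, ℝ)} (hδ : 0 < δ) (hh : 0 ≤ h) (hf : 0 ≤ f)
    (hfh : ∀ s : Icc a b, |(s : ℝ) - p| ≤ δ → h ≤ f s) : tent p δ h ≤ f := by
  refine ContinuousMap.le_def.mpr fun s => ?_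
  rcases le_or_gt δ |(s : ℝ) - p| with hs | hs
  · rw [tent_eq_zero_of_le hδ hs]; exact hf s
  · exact (tent_le hδ hh s).trans (hfh s hs.le)

theorem tent_apply_of_le_center (hδ : 0 < δ) {s : Icc a b} (h₁ : p - δ ≤ s)
    (h₂ : (s : ℝ) ≤ p) :
    tent p δ h s = h / δ * s + h * (1 - p / δ) := by
  have hle : (p - s) / δ ≤ 1 := (div_le_one hδ).mpr (by linarith)
  rw [tent_apply, abs_of_nonpos (by linarith), neg_sub, max_eq_right (by linarith)]
  field_simp
  ring

theorem tent_apply_of_center_le (hδ : 0 < δ) {s : Icc a b} (h₁ : p ≤ s)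
    (h₂ : (s : ℝ) ≤ p + δ) :
    tent p δ h s = -(h / δ) * s + h * (1 + p / δ) := by
  have hle : (s - p) / δ ≤ 1 := (div_le_one hδ).mpr (by linarith)
  rw [tent_apply, abs_of_nonneg (by linarith), max_eq_right (by linarith)]
  field_simp
  ring

end Interval

theorem pa14_tent {p δ h : ℝ} (hδ : 0 < δ) (h₁ : -1 < p - δ) (h₂ : p + δ < 1) :
    PA14 (tent p δ h) := by
  refine ⟨4, by norm_num, fun j => match j with
    | 0 => -1 | 1 => p - δ | 2 => p | 3 => p + δ | _ => 1, rfl, rfl, ?_, ?_⟩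
  · intro j hj
    interval_cases j <;> norm_num <;> linarith
  · intro j hj
    interval_cases j
    · exact ⟨0, 0, fun s _ (hs : (s : ℝ) ≤ p - δ) => by
        rw [tent_eq_zero_of_le hδ (by rw [abs_sub_comm, abs_of_nonneg] <;> linarith)]; ring⟩
    · exact ⟨_, _, fun s hs₁ hs₂ => tent_apply_of_le_center hδ hs₁ hs₂⟩
    · exact ⟨_, _, fun s hs₁ hs₂ => tent_apply_of_center_le hδ hs₁ hs₂⟩
    · exact ⟨0, 0, fun s (hs : p + δ ≤ s) _ => by
        rw [tent_eq_zero_of_le hδ (by rw [abs_of_nonneg] <;> linarith)]; ring⟩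

theorem memX14_of_pa14 {f : C(Icc (-1:ℝ) 1, ℝ)} (hf : PA14 f) : MemX14 f :=
  ⟨f, 0, hf, by rw [zero_smul, add_zero]⟩

/-- `X` satisfies property (P): for every `n ≥ 1` and all
`b₁, …, b_n ∈ X` with `0 < bᵢ` for each `i` and `min(b₁, …, b_n) ≠ 0` (pointwise minimum
in `C([-1,1], ℝ)`), there exists `x ∈ X` with `0 < x` and `x ≤ bᵢ` for all `i`. -/
theorem statement14 :
    ∀ (n : ℕ) (b : Fin (n + 1) → C(Icc (-1:ℝ) 1, ℝ)),
      (∀ i, MemX14 (b i)) → (∀ i, 0 < b i) →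
      Finset.univ.inf' Finset.univ_nonempty b ≠ 0 →
      ∃ x : C(Icc (-1:ℝ) 1, ℝ), MemX14 x ∧ 0 < x ∧ ∀ i, x ≤ b i := by
  intro n b _ hpos hne
  set g := Finset.univ.inf' Finset.univ_nonempty b
  have hg_le : ∀ i, g ≤ b i := fun i => Finset.inf'_le _ (Finset.mem_univ i)
  have hg_nonneg : 0 ≤ g := Finset.le_inf' _ _ fun i _ => (hpos i).le
  obtain ⟨t₀, ht₀⟩ : ∃ t₀, 0 < g t₀ := by
    by_contra! h
    exact hne (le_antisymm h hg_nonneg)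
  obtain ⟨p, δ, hδ, hp₁, hp₂, hg⟩ :=
    g.exists_Icc_subset_Ioo_forall_lt (by norm_num) (half_lt_self ht₀)
  have hε : 0 < g t₀ / 2 := half_pos ht₀
  refine ⟨tent p δ (g t₀ / 2), memX14_of_pa14 (pa14_tent hδ hp₁ hp₂),
    tent_pos ⟨by linarith, by linarith⟩ hε, fun i => ?_⟩
  exact (tent_le_of_forall_le hδ hε.le hg_nonneg fun s hs => (hg s hs).le).trans (hg_le i)
end
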